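/- arXiv:1809.09547 — 4 statements merged into one kernel-verified Lean document; each statement's English description precedes it below -/
import Mathlib

section
/- For nonnegative iid real random variables S_1,...,S_{kr} with k, r positive integers and p > 0, the (pk)-th inverse moment of the average of kr samples satisfies E[((1/(kr)) Σ_{i=1}^{kr} S_i)^{-pk}] ≤ (E[((1/r) Σ_{i=1}^{r} S_i)^{-p}])^k. -/
/-!
Split the `k * r` samples into `k` consecutive batches of `r`. The overall mean is the
arithmetic mean of the `k` batch means, so by AM-GM its `-(p k)`-th power is at most the product
of the `-p`-th powers of the batch means. The batches are independent and identically
distributed, so the expectation of that product is the `k`-th power of the `p`-th inverse moment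
of a single batch mean.
-/

open MeasureTheory ProbabilityTheory Finset

theorem Finset.sum_range_mul_eq_sum_fin_sum_fin {M : Type*} [AddCommMonoid M] (f : ℕ → M)
    (k r : ℕ) : ∑ i ∈ range (k * r), f i = ∑ c : Fin k, ∑ j : Fin r, f (c * r + j) := by
  rw [← Fin.sum_univ_eq_sum_range, ← finProdFinEquiv.sum_comp, Fintype.sum_prod_type]
  simp only [finProdFinEquiv_apply_val, add_comm, mul_comm]

namespace Real

theorem inv_card_mul_sum_rpow_neg_le_prod {ι : Type*} (s : Finset ι) {b : ι → ℝ}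
    (hb : ∀ i ∈ s, 0 < b i) {p : ℝ} (hp : 0 ≤ p) :
    ((#s : ℝ)⁻¹ * ∑ i ∈ s, b i) ^ (-(p * #s)) ≤ ∏ i ∈ s, b i ^ (-p) := by
  rcases s.eq_empty_or_nonempty with rfl | hs
  · simp
  have hcard : (0 : ℝ) < #s := by exact_mod_cast hs.card_pos
  have hgm_pos : 0 < ∏ i ∈ s, b i ^ (#s : ℝ)⁻¹ :=
    prod_pos fun i hi => rpow_pos_of_pos (hb i hi) _
  have hamgm : ∏ i ∈ s, b i ^ (#s : ℝ)⁻¹ ≤ (#s : ℝ)⁻¹ * ∑ i ∈ s, b i := by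
    rw [mul_sum]
    refine geom_mean_le_arith_mean_weighted s _ b (fun _ _ => by positivity) ?_
      fun i hi => (hb i hi).le
    rw [sum_const, nsmul_eq_mul, mul_inv_cancel₀ hcard.ne']
  calc ((#s : ℝ)⁻¹ * ∑ i ∈ s, b i) ^ (-(p * #s))
      ≤ (∏ i ∈ s, b i ^ (#s : ℝ)⁻¹) ^ (-(p * #s)) :=
        rpow_le_rpow_of_nonpos hgm_pos hamgm (by nlinarith)
    _ = ∏ i ∈ s, b i ^ (-p) := by
        rw [← finsetProd_rpow _ _ fun i hi => (rpow_pos_of_pos (hb i hi) _).le]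
        refine prod_congr rfl fun i hi => ?_
        rw [← rpow_mul (hb i hi).le]
        field_simp

theorem rpow_neg_mean_le_prod_batch_means {f : ℕ → ℝ} (hf : ∀ i, 0 < f i) {k r : ℕ}
    (hr : 0 < r) {p : ℝ} (hp : 0 ≤ p) :
    (((k * r : ℕ) : ℝ)⁻¹ * ∑ i ∈ range (k * r), f i) ^ (-(p * k)) ≤
      ∏ c : Fin k, ((r : ℝ)⁻¹ * ∑ j : Fin r, f (c * r + j)) ^ (-p) := by
  have : Nonempty (Fin r) := ⟨⟨0, hr⟩⟩
  have hmean : ((k * r : ℕ) : ℝ)⁻¹ * ∑ i ∈ range (k * r), f i =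
      (#(univ : Finset (Fin k)) : ℝ)⁻¹ * ∑ c : Fin k, (r : ℝ)⁻¹ * ∑ j : Fin r, f (c * r + j) := by
    rw [sum_range_mul_eq_sum_fin_sum_fin, ← mul_sum, card_univ, Fintype.card_fin, Nat.cast_mul,
      mul_inv, mul_assoc]
  have hbatch_pos (c : Fin k) : 0 < (r : ℝ)⁻¹ * ∑ j : Fin r, f (c * r + j) :=
    mul_pos (by positivity) (sum_pos (fun j _ => hf _) univ_nonempty)
  simpa only [hmean, card_univ, Fintype.card_fin] using
    inv_card_mul_sum_rpow_neg_le_prod univ (fun c _ => hbatch_pos c) hp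

end Real

namespace ProbabilityTheory

variable {Ω : Type*} [MeasurableSpace Ω] {μ : Measure Ω}

theorem iIndepFun.integrable_finset_prod {ι 𝕜 : Type*} [RCLike 𝕜] {X : ι → Ω → 𝕜}
    (hX : iIndepFun X μ) (mX : ∀ i, Measurable (X i)) {s : Finset ι}
    (hint : ∀ i ∈ s, Integrable (X i) μ) : Integrable (fun ω => ∏ i ∈ s, X i ω) μ := by
  classical
  have := hX.isProbabilityMeasure
  induction s using Finset.induction_on with
  | empty => simp
  | insert i s hi ih =>
    have hprod : Integrable (∏ j ∈ s, X j) μ := by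
      simpa only [← Finset.prod_apply] using ih fun j hj => hint j (mem_insert_of_mem hj)
    refine ((hX.indepFun_finsetProd_of_notMem mX hi).integrable_mul hprod
      (hint i (mem_insert_self i s))).congr (ae_of_all _ fun ω => ?_)
    simp only [Pi.mul_apply, Finset.prod_apply, prod_insert hi, mul_comm]

theorem iIndepFun.curry {ι κ β : Type*} [MeasurableSpace β] {X : ι × κ → Ω → β}
    (mX : ∀ q, Measurable (X q)) (hX : iIndepFun X μ) :
    iIndepFun (fun i ω j => X (i, j) ω) μ := by
  have := hX.isProbabilityMeasure
  have _ (i : ι) (j : κ) := Measure.isProbabilityMeasure_map (μ := μ) (mX (i, j)).aemeasurable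
  rw [iIndepFun_iff_map_fun_eq_infinitePi_map fun i => measurable_pi_lambda _ fun j => mX _]
  have hcurry : (fun ω i j => X (i, j) ω) = MeasurableEquiv.curry ι κ β ∘ fun ω q => X q ω := rfl
  rw [hcurry, ← Measure.map_map (by fun_prop) (measurable_pi_lambda _ mX),
    hX.map_fun_eq_infinitePi_map mX, Measure.infinitePi_map_curry fun i j => μ.map (X (i, j))]
  congr 1
  funext i
  exact ((hX.precomp (Prod.mk_right_injective i)).map_fun_eq_infinitePi_map fun j => mX _).symm

theorem iIndepFun.identDistrib_pi {Ω' ι : Type*} [MeasurableSpace Ω'] {ν : Measure Ω'}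
    {β : ι → Type*} [∀ i, MeasurableSpace (β i)] {X : (i : ι) → Ω → β i}
    {Y : (i : ι) → Ω' → β i} (mX : ∀ i, Measurable (X i)) (mY : ∀ i, Measurable (Y i))
    (hX : iIndepFun X μ) (hY : iIndepFun Y ν) (hXY : ∀ i, IdentDistrib (X i) (Y i) μ ν) :
    IdentDistrib (fun ω i => X i ω) (fun ω i => Y i ω) μ ν where
  aemeasurable_fst := (measurable_pi_lambda _ mX).aemeasurable
  aemeasurable_snd := (measurable_pi_lambda _ mY).aemeasurable
  map_eq := by
    simp_rw [hX.map_fun_eq_infinitePi_map mX, hY.map_fun_eq_infinitePi_map mY, (hXY _).map_eq]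

section Batches

variable {β : Type*} [MeasurableSpace β] {S : ℕ → Ω → β}

theorem iIndepFun.batches (hmeas : ∀ i, Measurable (S i)) (hindep : iIndepFun S μ) (r : ℕ)
    [NeZero r] : iIndepFun (fun c ω (j : Fin r) => S (c * r + j) ω) μ :=
  (hindep.precomp (Nat.divModEquiv r).symm.injective).curry fun _ => hmeas _

theorem identDistrib_batch (hmeas : ∀ i, Measurable (S i)) (hindep : iIndepFun S μ)
    (hid : ∀ i j, IdentDistrib (S i) (S j) μ μ) (r c : ℕ) :
    IdentDistrib (fun ω (j : Fin r) => S (c * r + j) ω) (fun ω (j : Fin r) => S j ω) μ μ :=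
  iIndepFun.identDistrib_pi (fun _ => hmeas _) (fun _ => hmeas _)
    (hindep.precomp ((add_right_injective _).comp Fin.val_injective))
    (hindep.precomp Fin.val_injective) fun _ => hid _ _

end Batches

end ProbabilityTheory

theorem inverse_moment_batch_bound_general
    {Ω : Type*} [MeasurableSpace Ω] (μ : Measure Ω) [IsProbabilityMeasure μ]
    (S : ℕ → Ω → ℝ) (hmeas : ∀ i, Measurable (S i))
    (hpos : ∀ i ω, 0 < S i ω)
    (hindep : iIndepFun S μ)
    (hid : ∀ i j, IdentDistrib (S i) (S j) μ μ)
    (p : ℝ) (hp : 0 < p) (k r : ℕ) (hr : 0 < r)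
    (hint2 : Integrable
      (fun ω => ((r : ℝ)⁻¹ * ∑ i ∈ Finset.range r, S i ω) ^ (-p)) μ) :
    ∫ ω, (((k * r : ℕ) : ℝ)⁻¹ * ∑ i ∈ Finset.range (k * r), S i ω) ^ (-(p * (k : ℝ))) ∂μ
      ≤ (∫ ω, ((r : ℝ)⁻¹ * ∑ i ∈ Finset.range r, S i ω) ^ (-p) ∂μ) ^ k := by
  have : NeZero r := ⟨hr.ne'⟩
  set φ : (Fin r → ℝ) → ℝ := fun v => ((r : ℝ)⁻¹ * ∑ j, v j) ^ (-p)
  have hφ : Measurable φ := by fun_prop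
  have hφ_batch_meas (c : ℕ) : Measurable fun ω => φ fun (j : Fin r) => S (c * r + j) ω :=
    hφ.comp (measurable_pi_lambda _ fun _ => hmeas _)
  have hφ_batch_indep : iIndepFun (fun (c : Fin k) ω => φ fun j => S (c * r + j) ω) μ :=
    ((iIndepFun.batches hmeas hindep r).comp (fun _ => φ) fun _ => hφ).precomp Fin.val_injective
  have hφ_batch_law (c : ℕ) : IdentDistrib (fun ω => φ fun j => S (c * r + j) ω)
      (fun ω => ((r : ℝ)⁻¹ * ∑ i ∈ range r, S i ω) ^ (-p)) μ μ := by
    have hφ_first_batch : (fun ω => ((r : ℝ)⁻¹ * ∑ i ∈ range r, S i ω) ^ (-p)) =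
        φ ∘ fun ω (j : Fin r) => S j ω := by
      funext ω
      simp only [φ, Function.comp_apply, Fin.sum_univ_eq_sum_range (S · ω)]
    rw [hφ_first_batch]
    exact (identDistrib_batch hmeas hindep hid r c).comp hφ
  calc _ ≤ ∫ ω, ∏ c : Fin k, φ fun j => S (c * r + j) ω ∂μ :=
        integral_mono_of_nonneg
          (ae_of_all _ fun ω => Real.rpow_nonneg
            (mul_nonneg (by positivity) (sum_nonneg fun i _ => (hpos i ω).le)) _)
          (hφ_batch_indep.integrable_finset_prod (fun c => hφ_batch_meas c)
            fun c _ => (hφ_batch_law c).integrable_iff.2 hint2)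
          (ae_of_all _ fun ω => Real.rpow_neg_mean_le_prod_batch_means (hpos · ω) hr hp.le)
    _ = ∏ c : Fin k, ∫ ω, φ (fun j => S (c * r + j) ω) ∂μ :=
        hφ_batch_indep.integral_fun_prod_eq_prod_integral
          fun c => (hφ_batch_meas c).aestronglyMeasurable
    _ = _ := by
        rw [prod_congr rfl fun (c : Fin k) _ => (hφ_batch_law c).integral_eq, prod_const,
          card_univ, Fintype.card_fin]

/-- For nonnegative iid real random variables `S 1, ..., S (k*r)`,
the `p*k`-th inverse moment of the average of `k*r` samples is bounded by the
`k`-th power of the `p`-th inverse moment of the average of `r` samples. -/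
theorem inverse_moment_batch_bound
    {Ω : Type*} [MeasurableSpace Ω] (μ : Measure Ω) [IsProbabilityMeasure μ]
    (S : ℕ → Ω → ℝ) (hmeas : ∀ i, Measurable (S i))
    (hpos : ∀ i ω, 0 < S i ω)
    (hindep : iIndepFun S μ)
    (hid : ∀ i j, IdentDistrib (S i) (S j) μ μ)
    (p : ℝ) (hp : 0 < p) (k r : ℕ) (hk : 0 < k) (hr : 0 < r)
    (hint1 : Integrable
      (fun ω => (((k * r : ℕ) : ℝ)⁻¹ * ∑ i ∈ Finset.range (k * r), S i ω) ^ (-(p * (k : ℝ)))) μ)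
    (hint2 : Integrable
      (fun ω => ((r : ℝ)⁻¹ * ∑ i ∈ Finset.range r, S i ω) ^ (-p)) μ) :
    ∫ ω, (((k * r : ℕ) : ℝ)⁻¹ * ∑ i ∈ Finset.range (k * r), S i ω) ^ (-(p * (k : ℝ))) ∂μ
      ≤ (∫ ω, ((r : ℝ)⁻¹ * ∑ i ∈ Finset.range r, S i ω) ^ (-p) ∂μ) ^ k :=
  inverse_moment_batch_bound_general μ S hmeas hpos hindep hid p hp k r hr hint2
end

section
/- For nonnegative iid random variables S_1, S_2, ..., the p-th inverse moment of the sample average is nonincreasing in the sample size: if s ≥ r then (E[((1/s) Σ_{i=1}^{s} S_i)^{-p}])^{1/p} ≤ (E[((1/r) Σ_{i=1}^{r} S_i)^{-p}])^{1/p}, provided the right-hand side is finite. -/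
open MeasureTheory ProbabilityTheory Finset

/-!
Index the first `s` variables by the cyclic group `Fin s` and let `W` be its first `r` elements.
The mean of all `s` variables is the average over `k` of the means over the translates `W + k`,
so by convexity of `x ↦ x ^ (-p)` on `(0, ∞)` its `(-p)`-th power is at most the average of the
`(-p)`-th powers of the translate means. Since the variables are iid, every translate mean has the
law of the mean over `W`; taking expectations and then `(1 / p)`-th powers gives the claim.
-/

lemma convexOn_rpow_neg {p : ℝ} (hp : 0 ≤ p) :
    ConvexOn ℝ (Set.Ioi 0) fun x : ℝ ↦ x ^ (-p) := by
  refine ⟨convex_Ioi 0, fun x (hx : 0 < x) y (hy : 0 < y) a b ha hb hab ↦ ?_⟩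
  simp only [smul_eq_mul]
  calc (a * x + b * y) ^ (-p)
      ≤ (x ^ a * y ^ b) ^ (-p) :=
        Real.rpow_le_rpow_of_nonpos (by positivity)
          (Real.geom_mean_le_arith_mean2_weighted ha hb hx.le hy.le hab) (neg_nonpos.2 hp)
    _ = (x ^ (-p)) ^ a * (y ^ (-p)) ^ b := by
        rw [Real.mul_rpow (by positivity) (by positivity), ← Real.rpow_mul hx.le,
          ← Real.rpow_mul hy.le, ← Real.rpow_mul hx.le, ← Real.rpow_mul hy.le, mul_comm a,
          mul_comm b]
    _ ≤ a * x ^ (-p) + b * y ^ (-p) :=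
        Real.geom_mean_le_arith_mean2_weighted ha hb (by positivity) (by positivity) hab

lemma sum_sum_add_eq_card_smul_sum {G M : Type*} [AddGroup G] [Fintype G] [AddCommMonoid M]
    (W : Finset G) (f : G → M) : ∑ k, ∑ j ∈ W, f (j + k) = #W • ∑ i, f i := by
  rw [sum_comm, ← sum_const]
  exact sum_congr rfl fun j _ ↦ Equiv.sum_comp (Equiv.addLeft j) f

lemma ProbabilityTheory.iIndepFun.identDistrib_comp_injective {Ω ι E : Type*}
    [MeasurableSpace Ω] {μ : Measure Ω} [Countable ι] [MeasurableSpace E] {X : ι → Ω → E}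
    (hindep : iIndepFun X μ) (hid : ∀ i j, IdentDistrib (X i) (X j) μ μ) {g : ι → ι}
    (hg : g.Injective) : IdentDistrib (fun ω i ↦ X (g i) ω) (fun ω i ↦ X i ω) μ μ :=
  IdentDistrib.pi (fun i ↦ hid (g i) i) (hindep.precomp hg) hindep

lemma Convex.inv_card_mul_sum_mem {ι : Type*} {D : Set ℝ} (hD : Convex ℝ D) {s : Finset ι}
    (hs : s.Nonempty) {x : ι → ℝ} (hx : ∀ i ∈ s, x i ∈ D) : (#s : ℝ)⁻¹ * ∑ i ∈ s, x i ∈ D := by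
  rw [mul_sum]
  refine hD.sum_mem (fun _ _ ↦ by positivity) ?_ hx
  rw [sum_const, nsmul_eq_mul, mul_inv_cancel₀ (by exact_mod_cast hs.card_pos.ne')]

section TranslateMeans

variable {G : Type*} [AddGroup G] [Fintype G] {D : Set ℝ} {φ : ℝ → ℝ} {W : Finset G}

lemma ConvexOn.map_mean_le_mean_map_translate_mean (hφ : ConvexOn ℝ D φ) (hW : W.Nonempty)
    {x : G → ℝ} (hx : ∀ i, x i ∈ D) :
    φ ((Fintype.card G : ℝ)⁻¹ * ∑ i, x i)
      ≤ ∑ k, (Fintype.card G : ℝ)⁻¹ * φ ((#W : ℝ)⁻¹ * ∑ j ∈ W, x (j + k)) := by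
  have hmean : (Fintype.card G : ℝ)⁻¹ * ∑ i, x i
      = ∑ k, (Fintype.card G : ℝ)⁻¹ • ((#W : ℝ)⁻¹ * ∑ j ∈ W, x (j + k)) := by
    rw [← smul_sum, ← mul_sum, sum_sum_add_eq_card_smul_sum, nsmul_eq_mul, smul_eq_mul,
      inv_mul_cancel_left₀ (by exact_mod_cast hW.card_pos.ne')]
  rw [hmean]
  refine hφ.map_sum_le (fun _ _ ↦ by positivity) ?_
    fun k _ ↦ hφ.1.inv_card_mul_sum_mem hW fun j _ ↦ hx (j + k)
  rw [sum_const, card_univ, nsmul_eq_mul,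
    mul_inv_cancel₀ (by exact_mod_cast Fintype.card_ne_zero)]

theorem ConvexOn.integral_comp_mean_le_integral_comp_mean_of_iid {Ω : Type*}
    [MeasurableSpace Ω] {μ : Measure Ω} (hφ : ConvexOn ℝ D φ) (hφ_meas : Measurable φ)
    (hφ_nonneg : ∀ x ∈ D, 0 ≤ φ x) (hW : W.Nonempty) {X : G → Ω → ℝ} (hXD : ∀ i ω, X i ω ∈ D)
    (hindep : iIndepFun X μ) (hid : ∀ i j, IdentDistrib (X i) (X j) μ μ)
    (hint : Integrable (fun ω ↦ φ ((#W : ℝ)⁻¹ * ∑ j ∈ W, X j ω)) μ) :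
    ∫ ω, φ ((Fintype.card G : ℝ)⁻¹ * ∑ i, X i ω) ∂μ
      ≤ ∫ ω, φ ((#W : ℝ)⁻¹ * ∑ j ∈ W, X j ω) ∂μ := by
  have hshift (k : G) : IdentDistrib (fun ω ↦ φ ((#W : ℝ)⁻¹ * ∑ j ∈ W, X (j + k) ω))
      (fun ω ↦ φ ((#W : ℝ)⁻¹ * ∑ j ∈ W, X j ω)) μ μ :=
    (hindep.identDistrib_comp_injective hid (add_left_injective k)).comp
      (u := fun y : G → ℝ ↦ φ ((#W : ℝ)⁻¹ * ∑ j ∈ W, y j)) (by fun_prop)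
  have hint_shift (k : G) := (hshift k).integrable_iff.2 hint
  have hmean_mem (ω : Ω) : (Fintype.card G : ℝ)⁻¹ * ∑ i, X i ω ∈ D :=
    hφ.1.inv_card_mul_sum_mem univ_nonempty fun i _ ↦ hXD i ω
  calc ∫ ω, φ ((Fintype.card G : ℝ)⁻¹ * ∑ i, X i ω) ∂μ
      ≤ ∫ ω, ∑ k, (Fintype.card G : ℝ)⁻¹ * φ ((#W : ℝ)⁻¹ * ∑ j ∈ W, X (j + k) ω) ∂μ :=
        integral_mono_of_nonneg (.of_forall fun ω ↦ hφ_nonneg _ (hmean_mem ω))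
          (integrable_finsetSum _ fun k _ ↦ (hint_shift k).const_mul _)
          (.of_forall fun ω ↦ hφ.map_mean_le_mean_map_translate_mean hW fun i ↦ hXD i ω)
    _ = ∫ ω, φ ((#W : ℝ)⁻¹ * ∑ j ∈ W, X j ω) ∂μ := by
        rw [integral_finsetSum _ fun k _ ↦ (hint_shift k).const_mul _]
        simp only [integral_const_mul, (hshift _).integral_eq, sum_const, card_univ,
          nsmul_eq_mul]
        rw [mul_inv_cancel_left₀ (by exact_mod_cast Fintype.card_ne_zero)]

end TranslateMeans

theorem inverse_moment_average_antitone_general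
    {Ω : Type*} [MeasurableSpace Ω] (μ : Measure Ω) [IsProbabilityMeasure μ]
    (S : ℕ → Ω → ℝ)
    (hpos : ∀ i ω, 0 < S i ω)
    (hindep : iIndepFun S μ)
    (hid : ∀ i j, IdentDistrib (S i) (S j) μ μ)
    (p : ℝ) (hp : 0 < p) (r s : ℕ) (hr : 0 < r) (hrs : r ≤ s)
    (hint : Integrable (fun ω => ((r : ℝ)⁻¹ * ∑ i ∈ Finset.range r, S i ω) ^ (-p)) μ) :
    (∫ ω, ((s : ℝ)⁻¹ * ∑ i ∈ Finset.range s, S i ω) ^ (-p) ∂μ) ^ (1 / p)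
      ≤ (∫ ω, ((r : ℝ)⁻¹ * ∑ i ∈ Finset.range r, S i ω) ^ (-p) ∂μ) ^ (1 / p) := by
  have : NeZero s := ⟨by omega⟩
  set W : Finset (Fin s) := univ.map (Fin.castLEEmb hrs)
  have hW_card : #W = r := by simp [W]
  have hW_sum (ω : Ω) : ∑ j ∈ W, S j ω = ∑ i ∈ range r, S i ω := by
    simp [W, Fin.sum_univ_eq_sum_range (fun i ↦ S i ω)]
  have huniv_sum (ω : Ω) : ∑ i : Fin s, S i ω = ∑ i ∈ range s, S i ω :=
    Fin.sum_univ_eq_sum_range (fun i ↦ S i ω) s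
  have hmean_le := (convexOn_rpow_neg hp.le).integral_comp_mean_le_integral_comp_mean_of_iid
    (by fun_prop) (fun x hx ↦ Real.rpow_nonneg (le_of_lt hx) _) (W := W)
    (card_pos.1 (hW_card ▸ hr)) (X := fun i ω ↦ S i ω) (fun i ↦ hpos i)
    (hindep.precomp Fin.val_injective) (fun i j ↦ hid i j)
    (by simpa only [hW_card, hW_sum] using hint)
  simp only [hW_card, hW_sum, huniv_sum, Fintype.card_fin] at hmean_le
  have hmean_nonneg (ω : Ω) : 0 ≤ (s : ℝ)⁻¹ * ∑ i ∈ range s, S i ω :=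
    mul_nonneg (by positivity) (sum_nonneg fun i _ ↦ (hpos i ω).le)
  exact Real.rpow_le_rpow (integral_nonneg fun ω ↦ Real.rpow_nonneg (hmean_nonneg ω) _) hmean_le
    (by positivity)

/-- For positive iid random variables, the `p`-th inverse moment of the sample
average is nonincreasing in the sample size. -/
theorem inverse_moment_average_antitone
    {Ω : Type*} [MeasurableSpace Ω] (μ : Measure Ω) [IsProbabilityMeasure μ]
    (S : ℕ → Ω → ℝ) (hmeas : ∀ i, Measurable (S i))
    (hpos : ∀ i ω, 0 < S i ω)
    (hindep : iIndepFun S μ)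
    (hid : ∀ i j, IdentDistrib (S i) (S j) μ μ)
    (p : ℝ) (hp : 0 < p) (r s : ℕ) (hr : 0 < r) (hrs : r ≤ s)
    (hint : Integrable (fun ω => ((r : ℝ)⁻¹ * ∑ i ∈ Finset.range r, S i ω) ^ (-p)) μ) :
    (∫ ω, ((s : ℝ)⁻¹ * ∑ i ∈ Finset.range s, S i ω) ^ (-p) ∂μ) ^ (1 / p)
      ≤ (∫ ω, ((r : ℝ)⁻¹ * ∑ i ∈ Finset.range r, S i ω) ^ (-p) ∂μ) ^ (1 / p) :=
  inverse_moment_average_antitone_general μ S hpos hindep hid p hp r s hr hrs hint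
end

section
/- Let P satisfy PV ≤ δV + L with δ ∈ [0,1), L ≥ 1, and let P_R denote the restriction of P to B_R = {V ≤ R}, i.e., P_R(x,A) = P(x, A ∩ B_R) + 1_A(x) P(x, B_R^c). Let P̃ be a kernel with P̃(x, B_R) = 1 for all x, and suppose Δ(R) := sup_{x ∈ B_R} ‖P_R(x,·) − P̃(x,·)‖_tv / V(x) satisfies R·Δ(R) ≤ (1−δ)/2. Then P̃ satisfies P̃V(x) ≤ (δ + R·Δ(R)) V(x) + L for x ∈ B_R and P̃V(x) ≤ V(x) for x ∉ B_R. -/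
open MeasureTheory ProbabilityTheory

/-- The `V`-weighted distance `‖μ − ν‖_V = sup_{|f| ≤ V} |μ(f) − ν(f)|`. -/
noncomputable def vDist {G : Type*} [MeasurableSpace G] (V : G → ℝ) (μ ν : Measure G) : ℝ :=
  ⨆ f : {f : G → ℝ // Measurable f ∧ ∀ x, |f x| ≤ V x},
    |(∫ x, (f : G → ℝ) x ∂μ) - ∫ x, (f : G → ℝ) x ∂ν|

/-- The restriction `P_R(x,·) = P(x, · ∩ B) + P(x,Bᶜ) δ_x` of a kernel to a set `B`. -/
noncomputable def restrictKer {G : Type*} [MeasurableSpace G]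
    (P : Kernel G G) (B : Set G) (x : G) : Measure G :=
  (P x).restrict B + ((P x) Bᶜ) • Measure.dirac x

/-!
On `B_R` the test function `min V R / R` is bounded by one, so the total variation bound controls
`|P̃V(x) − P_R(min V R)(x)| ≤ R Δ V(x)`; here `P̃V = P̃(min V R)` because `P̃(x,·)` lives on `B_R`.
Moving the mass `P(x, B_Rᶜ)` from the point `x ∈ B_R`, where `min V R = V x ≤ R`, back to `B_Rᶜ`,
where `min V R = R`, only increases the integral, so `P_R(min V R)(x) ≤ PV(x) ≤ δ V(x) + L`.
Off `B_R` simply `P̃V(x) ≤ R < V(x)`.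
-/

section vDist

variable {G : Type*} [MeasurableSpace G] {μ ν : Measure G} {f : G → ℝ}

theorem abs_integral_sub_le_vDist {W : G → ℝ} (hWμ : Integrable W μ) (hWν : Integrable W ν)
    (hf : Measurable f) (hfW : ∀ x, |f x| ≤ W x) :
    |(∫ x, f x ∂μ) - ∫ x, f x ∂ν| ≤ vDist W μ ν := by
  have hbound : ∀ (ρ : Measure G), Integrable W ρ → ∀ g : G → ℝ, (∀ x, |g x| ≤ W x) →
      |∫ x, g x ∂ρ| ≤ ∫ x, W x ∂ρ :=
    fun ρ hWρ g hgW => norm_integral_le_of_norm_le (f := g) hWρ (.of_forall hgW)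
  refine le_ciSup (f := fun g : {g : G → ℝ // Measurable g ∧ ∀ x, |g x| ≤ W x} =>
    |(∫ x, (g : G → ℝ) x ∂μ) - ∫ x, (g : G → ℝ) x ∂ν|) ?_ ⟨f, hf, hfW⟩
  refine ⟨(∫ x, W x ∂μ) + ∫ x, W x ∂ν, ?_⟩
  rintro _ ⟨g, rfl⟩
  exact (abs_sub _ _).trans (add_le_add (hbound μ hWμ g g.2.2) (hbound ν hWν g g.2.2))

theorem abs_integral_sub_le_mul_vDist_one [IsFiniteMeasure μ] [IsFiniteMeasure ν] {c : ℝ}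
    (hc : 0 < c) (hf : Measurable f) (hfc : ∀ x, |f x| ≤ c) :
    |(∫ x, f x ∂μ) - ∫ x, f x ∂ν| ≤ c * vDist (fun _ => 1) μ ν := by
  have hscaled : ∀ x, |f x / c| ≤ 1 := fun x => by
    rw [abs_div, abs_of_pos hc, div_le_one hc]
    exact hfc x
  have h := abs_integral_sub_le_vDist (μ := μ) (ν := ν) (integrable_const (1 : ℝ))
    (integrable_const (1 : ℝ)) (hf.div_const c) hscaled
  rw [integral_div, integral_div, ← sub_div, abs_div, abs_of_pos hc, div_le_iff₀ hc] at h
  linarith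

end vDist

section restrictKer

variable {G : Type*} [MeasurableSpace G] (P : Kernel G G) [IsFiniteKernel P] {B : Set G} {x : G}

instance isFiniteMeasure_restrictKer : IsFiniteMeasure (restrictKer P B x) := by
  have : IsFiniteMeasure (((P x) Bᶜ) • Measure.dirac x) :=
    ⟨ENNReal.mul_lt_top (measure_lt_top _ _) (measure_lt_top _ _)⟩
  unfold restrictKer
  infer_instance

theorem integral_restrictKer {f : G → ℝ} (hf : Measurable f) (hfi : Integrable f (P x)) :
    ∫ y, f y ∂(restrictKer P B x) = (∫ y in B, f y ∂(P x)) + (P x).real Bᶜ * f x := by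
  have hdirac : Integrable f (Measure.dirac x) := integrable_dirac' hf.stronglyMeasurable enorm_lt_top
  rw [restrictKer, integral_add_measure hfi.restrict (hdirac.smul_measure (measure_ne_top _ _)),
    integral_smul_measure, integral_dirac' f x hf.stronglyMeasurable, smul_eq_mul]
  rfl

theorem integral_restrictKer_le {f : G → ℝ} (hB : MeasurableSet B) (hf : Measurable f)
    (hfi : Integrable f (P x)) (hfx : ∀ y ∈ Bᶜ, f x ≤ f y) :
    ∫ y, f y ∂(restrictKer P B x) ≤ ∫ y, f y ∂(P x) := by
  have hcompl : (P x).real Bᶜ * f x ≤ ∫ y in Bᶜ, f y ∂(P x) := by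
    rw [mul_comm]
    exact setIntegral_ge_of_const_le_real hB.compl (measure_ne_top _ _) hfx hfi.integrableOn
  rw [integral_restrictKer P hf hfi, ← integral_add_compl hB hfi]
  linarith

end restrictKer

theorem ae_le_of_measure_setOf_le_eq_one {G : Type*} [MeasurableSpace G] {μ : Measure G}
    [IsProbabilityMeasure μ] {V : G → ℝ} (hV : Measurable V) {R : ℝ} (hμ : μ {y | V y ≤ R} = 1) :
    ∀ᵐ y ∂μ, V y ≤ R :=
  (ae_iff_measure_eq (p := fun y => V y ≤ R) (hV measurableSet_Iic).nullMeasurableSet).2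
    (by rw [hμ, measure_univ])

theorem integral_le_integral_add_mul_vDist_restrictKer {G : Type*} [MeasurableSpace G]
    (P : Kernel G G) [IsFiniteKernel P] {ν : Measure G} [IsFiniteMeasure ν] {V : G → ℝ}
    (hVmeas : Measurable V) (hV : ∀ y, 0 ≤ V y) {x : G} (hVint : Integrable V (P x)) {R : ℝ}
    (hR : 0 < R) (hν : ∀ᵐ y ∂ν, V y ≤ R) (hx : V x ≤ R) :
    ∫ y, V y ∂ν ≤ ∫ y, V y ∂(P x) + R * vDist (fun _ => 1) (restrictKer P {y | V y ≤ R} x) ν := by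
  set W : G → ℝ := fun y => min (V y) R
  have hWmeas : Measurable W := hVmeas.min measurable_const
  have hWR : ∀ y, |W y| ≤ R := fun y =>
    abs_le.2 ⟨by linarith [le_min (hV y) hR.le, min_le_right (V y) R], min_le_right _ _⟩
  have hWi : Integrable W (P x) := .of_bound hWmeas.aestronglyMeasurable R (.of_forall hWR)
  have hνW : ∫ y, V y ∂ν = ∫ y, W y ∂ν :=
    integral_congr_ae <| hν.mono fun y hy => (min_eq_left hy).symm
  have hRestrict : ∫ y, W y ∂(restrictKer P {y | V y ≤ R} x) ≤ ∫ y, W y ∂(P x) :=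
    integral_restrictKer_le P (hVmeas measurableSet_Iic) hWmeas hWi fun y hy => by
      have hy' : R < V y := not_le.1 hy
      show min (V x) R ≤ min (V y) R
      rw [min_eq_left hx, min_eq_right hy'.le]
      exact hx
  have hW_le_V : ∫ y, W y ∂(P x) ≤ ∫ y, V y ∂(P x) :=
    integral_mono hWi hVint fun y => min_le_left _ _
  have htv := abs_integral_sub_le_mul_vDist_one (μ := restrictKer P {y | V y ≤ R} x)
    (ν := ν) hR hWmeas hWR
  linarith [(abs_le.1 htv).1]

theorem restricted_kernel_lyapunov_general {G : Type*} [MeasurableSpace G]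
    (P Pt : Kernel G G) [IsMarkovKernel P] [IsMarkovKernel Pt]
    (V : G → ℝ) (hVmeas : Measurable V) (hV : ∀ x, 1 ≤ V x)
    (δ L : ℝ)
    (hVint : ∀ x, Integrable V (P x))
    (hlyap : ∀ x, ∫ y, V y ∂(P x) ≤ δ * V x + L)
    (R : ℝ) (hR : 1 ≤ R)
    (hPt : ∀ x, (Pt x) {y | V y ≤ R} = 1)
    (Δ : ℝ)
    (hΔ : ∀ x, V x ≤ R → vDist (fun _ => 1) (restrictKer P {y | V y ≤ R} x) (Pt x) ≤ Δ * V x) :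
    (∀ x, V x ≤ R → ∫ y, V y ∂(Pt x) ≤ (δ + R * Δ) * V x + L) ∧
      (∀ x, ¬ V x ≤ R → ∫ y, V y ∂(Pt x) ≤ V x) := by
  have hR0 : 0 < R := one_pos.trans_le hR
  have hV0 : ∀ y, 0 ≤ V y := fun y => zero_le_one.trans (hV y)
  have hPtB : ∀ x, ∀ᵐ y ∂(Pt x), V y ≤ R := fun x => ae_le_of_measure_setOf_le_eq_one hVmeas (hPt x)
  refine ⟨fun x hx => ?_, fun x hx => ?_⟩
  · calc ∫ y, V y ∂(Pt x)
        ≤ ∫ y, V y ∂(P x) + R * vDist (fun _ => 1) (restrictKer P {y | V y ≤ R} x) (Pt x) :=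
          integral_le_integral_add_mul_vDist_restrictKer P hVmeas hV0 (hVint x) hR0 (hPtB x) hx
      _ ≤ δ * V x + L + R * (Δ * V x) :=
          add_le_add (hlyap x) (mul_le_mul_of_nonneg_left (hΔ x hx) hR0.le)
      _ = (δ + R * Δ) * V x + L := by ring
  · calc ∫ y, V y ∂(Pt x) ≤ ∫ _, R ∂(Pt x) :=
          integral_mono_of_nonneg (.of_forall hV0) (integrable_const R) (hPtB x)
      _ = R := by simp
      _ ≤ V x := (not_le.1 hx).le

/-- if `PV ≤ δV + L`, `P̃(x,B_R) = 1` for all `x`, and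
`‖P_R(x,·) − P̃(x,·)‖_tv ≤ Δ V(x)` on `B_R` with `RΔ ≤ (1−δ)/2`, then
`P̃V(x) ≤ (δ + RΔ) V(x) + L` on `B_R` and `P̃V(x) ≤ V(x)` off `B_R`. -/
theorem restricted_kernel_lyapunov {G : Type*} [MeasurableSpace G]
    (P Pt : Kernel G G) [IsMarkovKernel P] [IsMarkovKernel Pt]
    (V : G → ℝ) (hVmeas : Measurable V) (hV : ∀ x, 1 ≤ V x)
    (δ L : ℝ) (hδ : δ ∈ Set.Ico (0 : ℝ) 1) (hL : 1 ≤ L)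
    (hVint : ∀ x, Integrable V (P x)) (hVintT : ∀ x, Integrable V (Pt x))
    (hlyap : ∀ x, ∫ y, V y ∂(P x) ≤ δ * V x + L)
    (R : ℝ) (hR : 1 ≤ R)
    (hPt : ∀ x, (Pt x) {y | V y ≤ R} = 1)
    (Δ : ℝ) (hΔ0 : 0 ≤ Δ)
    (hΔ : ∀ x, V x ≤ R → vDist (fun _ => 1) (restrictKer P {y | V y ≤ R} x) (Pt x) ≤ Δ * V x)
    (hRΔ : R * Δ ≤ (1 - δ) / 2) :
    (∀ x, V x ≤ R → ∫ y, V y ∂(Pt x) ≤ (δ + R * Δ) * V x + L) ∧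
      (∀ x, ¬ V x ≤ R → ∫ y, V y ∂(Pt x) ≤ V x) :=
  restricted_kernel_lyapunov_general P Pt V hVmeas hV δ L hVint hlyap R hR hPt Δ hΔ
end

section
/- Under the setup of the MCwM algorithm for doubly-intractable targets: if W_N(x), W_N(z) are independent positive random variables with E[W_N(x)] = E[W_N(z)] = 1, s_N(x) := (E|W_N(x) − 1|²)^{1/2}, i_{2,N}(z) := (E[W_N(z)^{-2}])^{1/2}, a(x,z) := min{1, r(x,z)} and a_N(x,z) := E[min{1, r(x,z) W_N(x)/W_N(z)}] for a fixed real r(x,z) ≥ 0, then |a(x,z) − a_N(x,z)| ≤ a(x,z) · i_{2,N}(z) · (s_N(x) + s_N(z)). -/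
/-! With `t = Wx / Wz`, the elementary bound `|min 1 r - min 1 (r t)| ≤ min 1 r * |1 - t|` holds
pointwise and `|1 - t| = |Wx - Wz| * Wz⁻¹`. After integrating, Cauchy–Schwarz splits off the factor
`Wz⁻¹`, and Minkowski's inequality in `L²` for `Wx - Wz = (Wx - 1) - (Wz - 1)` gives the sum of the
two `L²` distances to `1`. -/

open MeasureTheory ProbabilityTheory

lemma abs_min_one_sub_min_one_mul_le {r t : ℝ} (hr : 0 ≤ r) (ht : 0 ≤ t) :
    |min 1 r - min 1 (r * t)| ≤ min 1 r * |1 - t| := by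
  rcases le_total r 1 with h1 | h1 <;> rcases le_total (r * t) 1 with h2 | h2
  · rw [min_eq_right h1, min_eq_right h2, ← abs_of_nonneg hr, ← abs_mul, mul_one_sub,
      abs_of_nonneg hr]
  · rw [min_eq_right h1, min_eq_left h2, abs_of_nonpos (by linarith),
      abs_of_nonpos (by nlinarith)]
    nlinarith
  · rw [min_eq_left h1, min_eq_right h2, abs_of_nonneg (by linarith),
      abs_of_nonneg (by nlinarith)]
    nlinarith
  · simp [min_eq_left h1, min_eq_left h2]

lemma abs_min_one_sub_min_one_mul_div_le {r x z : ℝ} (hr : 0 ≤ r) (hx : 0 ≤ x) (hz : 0 < z) :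
    |min 1 r - min 1 (r * x / z)| ≤ min 1 r * |(x - z) * z⁻¹| := by
  have h := abs_min_one_sub_min_one_mul_le hr (div_nonneg hx hz.le)
  rwa [← mul_div_assoc, abs_sub_comm 1, div_sub_one hz.ne', div_eq_mul_inv] at h

section L2

variable {Ω : Type*} [MeasurableSpace Ω] {μ : Measure Ω} {f g : Ω → ℝ}

lemma integral_abs_mul_le_sqrt_mul_sqrt (hf : MemLp f 2 μ) (hg : MemLp g 2 μ) :
    ∫ ω, |f ω * g ω| ∂μ ≤ √(∫ ω, f ω ^ 2 ∂μ) * √(∫ ω, g ω ^ 2 ∂μ) := by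
  have h := integral_mul_norm_le_Lp_mul_Lq Real.HolderConjugate.two_two
    (by simpa using hf) (by simpa using hg)
  simpa only [Real.norm_eq_abs, abs_mul, Real.rpow_two, sq_abs, ← Real.sqrt_eq_rpow] using h

lemma sqrt_integral_sub_sq_le (hf : MemLp f 2 μ) (hg : MemLp g 2 μ) :
    √(∫ ω, (f ω - g ω) ^ 2 ∂μ) ≤ √(∫ ω, f ω ^ 2 ∂μ) + √(∫ ω, g ω ^ 2 ∂μ) := by
  set A := ∫ ω, f ω ^ 2 ∂μ
  set B := ∫ ω, g ω ^ 2 ∂μ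
  have hfg : Integrable (fun ω => f ω * g ω) μ := hf.integrable_mul hg
  have expand : ∫ ω, (f ω - g ω) ^ 2 ∂μ = A - 2 * ∫ ω, f ω * g ω ∂μ + B := by
    simp_rw [sub_sq, mul_assoc]
    rw [integral_add (by exact hf.integrable_sq.sub (hfg.const_mul 2)) hg.integrable_sq,
      integral_sub hf.integrable_sq (hfg.const_mul 2), integral_const_mul]
  have cauchy_schwarz : -∫ ω, f ω * g ω ∂μ ≤ √A * √B :=
    (neg_le_abs _).trans (abs_integral_le_integral_abs.trans
      (integral_abs_mul_le_sqrt_mul_sqrt hf hg))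
  have hA : 0 ≤ A := integral_nonneg fun ω => sq_nonneg _
  have hB : 0 ≤ B := integral_nonneg fun ω => sq_nonneg _
  rw [Real.sqrt_le_left (by positivity), expand]
  nlinarith [Real.sq_sqrt hA, Real.sq_sqrt hB]

end L2

theorem mcwm_acceptance_error_general {Ω : Type*} [MeasurableSpace Ω]
    (μ : Measure Ω) [IsProbabilityMeasure μ]
    (Wx Wz : Ω → ℝ) (hmx : Measurable Wx) (hmz : Measurable Wz)
    (hpx : ∀ ω, 0 < Wx ω) (hpz : ∀ ω, 0 < Wz ω)
    (hsqx : Integrable (fun ω => (Wx ω - 1) ^ 2) μ)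
    (hsqz : Integrable (fun ω => (Wz ω - 1) ^ 2) μ)
    (hinv : Integrable (fun ω => ((Wz ω)⁻¹) ^ 2) μ)
    (r : ℝ) (hr : 0 ≤ r)
    (hintmin : Integrable (fun ω => min 1 (r * Wx ω / Wz ω)) μ) :
    |min 1 r - ∫ ω, min 1 (r * Wx ω / Wz ω) ∂μ|
      ≤ min 1 r * Real.sqrt (∫ ω, ((Wz ω)⁻¹) ^ 2 ∂μ)
          * (Real.sqrt (∫ ω, (Wx ω - 1) ^ 2 ∂μ) + Real.sqrt (∫ ω, (Wz ω - 1) ^ 2 ∂μ)) := by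
  have hx : MemLp (fun ω => Wx ω - 1) 2 μ := (memLp_two_iff_integrable_sq (by fun_prop)).2 hsqx
  have hz : MemLp (fun ω => Wz ω - 1) 2 μ := (memLp_two_iff_integrable_sq (by fun_prop)).2 hsqz
  have hzinv : MemLp (fun ω => (Wz ω)⁻¹) 2 μ :=
    (memLp_two_iff_integrable_sq (by fun_prop)).2 hinv
  have hxz : MemLp (fun ω => Wx ω - Wz ω) 2 μ := by
    simpa only [Pi.sub_def, sub_sub_sub_cancel_right] using hx.sub hz
  have hbound : Integrable (fun ω => min 1 r * |(Wx ω - Wz ω) * (Wz ω)⁻¹|) μ :=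
    (hxz.integrable_mul hzinv).abs.const_mul _
  calc |min 1 r - ∫ ω, min 1 (r * Wx ω / Wz ω) ∂μ|
      = |∫ ω, (min 1 r - min 1 (r * Wx ω / Wz ω)) ∂μ| := by
        rw [integral_sub (integrable_const _) hintmin, integral_const, probReal_univ, one_smul]
    _ ≤ ∫ ω, min 1 r * |(Wx ω - Wz ω) * (Wz ω)⁻¹| ∂μ :=
        abs_integral_le_integral_abs.trans
          (integral_mono ((integrable_const _).sub hintmin).abs hbound
            fun ω => abs_min_one_sub_min_one_mul_div_le hr (hpx ω).le (hpz ω))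
    _ = min 1 r * ∫ ω, |(Wx ω - Wz ω) * (Wz ω)⁻¹| ∂μ := integral_const_mul _ _
    _ ≤ min 1 r * (√(∫ ω, (Wx ω - Wz ω) ^ 2 ∂μ) * √(∫ ω, ((Wz ω)⁻¹) ^ 2 ∂μ)) := by
        gcongr
        exact integral_abs_mul_le_sqrt_mul_sqrt hxz hzinv
    _ ≤ min 1 r * ((√(∫ ω, (Wx ω - 1) ^ 2 ∂μ) + √(∫ ω, (Wz ω - 1) ^ 2 ∂μ))
          * √(∫ ω, ((Wz ω)⁻¹) ^ 2 ∂μ)) := by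
        gcongr
        simpa only [sub_sub_sub_cancel_right] using sqrt_integral_sub_sq_le hx hz
    _ = _ := by ring

/-- acceptance probability perturbation for MCwM: for independent positive
mean-one random variables `Wx, Wz` and a fixed acceptance ratio `r ≥ 0`, with
`a = min{1,r}` and `a_N = E[min{1, r Wx/Wz}]`, one has
`|a − a_N| ≤ a · (E[Wz⁻²])^{1/2} · ((E|Wx−1|²)^{1/2} + (E|Wz−1|²)^{1/2})`. -/
theorem mcwm_acceptance_error {Ω : Type*} [MeasurableSpace Ω]
    (μ : Measure Ω) [IsProbabilityMeasure μ]
    (Wx Wz : Ω → ℝ) (hmx : Measurable Wx) (hmz : Measurable Wz)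
    (hpx : ∀ ω, 0 < Wx ω) (hpz : ∀ ω, 0 < Wz ω)
    (hindep : IndepFun Wx Wz μ)
    (hintx : Integrable Wx μ) (hintz : Integrable Wz μ)
    (hmeanx : ∫ ω, Wx ω ∂μ = 1) (hmeanz : ∫ ω, Wz ω ∂μ = 1)
    (hsqx : Integrable (fun ω => (Wx ω - 1) ^ 2) μ)
    (hsqz : Integrable (fun ω => (Wz ω - 1) ^ 2) μ)
    (hinv : Integrable (fun ω => ((Wz ω)⁻¹) ^ 2) μ)
    (r : ℝ) (hr : 0 ≤ r)
    (hintmin : Integrable (fun ω => min 1 (r * Wx ω / Wz ω)) μ) :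
    |min 1 r - ∫ ω, min 1 (r * Wx ω / Wz ω) ∂μ|
      ≤ min 1 r * Real.sqrt (∫ ω, ((Wz ω)⁻¹) ^ 2 ∂μ)
          * (Real.sqrt (∫ ω, (Wx ω - 1) ^ 2 ∂μ) + Real.sqrt (∫ ω, (Wz ω - 1) ^ 2 ∂μ)) :=
  mcwm_acceptance_error_general μ Wx Wz hmx hmz hpx hpz hsqx hsqz hinv r hr hintmin
end
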